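/- arXiv:1412.7965 — 3 statements merged into one kernel-verified Lean document; each statement's English description precedes it below -/
import Mathlib

section
/- Every context C over a set of context dimensions, taken together with the domain theory Φ, is propositionally satisfiable: the valuation that makes true exactly the assignments (d = v) where v is an ancestor (under the reflexive-transitive closure of the predecessor relation) of the value assigned to d in C satisfies both C and Φ. -/
/-- Propositional context expressions over dimension-value atoms `(d = v)`. -/
inductive CtxExpr (D V : Type) where
  | atom : D → V → CtxExpr D V
  | and  : CtxExpr D V → CtxExpr D V → CtxExpr D V
  | or   : CtxExpr D V → CtxExpr D V → CtxExpr D V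
  | not  : CtxExpr D V → CtxExpr D V

/-- Evaluation of a context expression under a propositional valuation
    `w : D → V → Prop` of the atoms. -/
def CtxExpr.eval {D V : Type} (w : D → V → Prop) : CtxExpr D V → Prop
  | .atom d v => w d v
  | .and a b  => a.eval w ∧ b.eval w
  | .or a b   => a.eval w ∨ b.eval w
  | .not a    => ¬ a.eval w

/-- `pred d v1 v2` means `v1 ≺_d v2`, i.e. `v2` is the parent of `v1` in the
    tree-shaped value domain of dimension `d`.  A valuation satisfies the
    domain theory `Φ` iff it satisfies all upward-closure implications and all
    sibling-disjointness axioms. -/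
def satPhi {D V : Type} (pred : D → V → V → Prop) (w : D → V → Prop) : Prop :=
  (∀ d v1 v2, pred d v1 v2 → w d v1 → w d v2) ∧
  (∀ d v1 v2 p, pred d v1 p → pred d v2 p → v1 ≠ v2 → ¬ (w d v1 ∧ w d v2))

/-- A valuation satisfies a context `C` (one value per dimension) iff it makes
    every atom `(d = C d)` true. -/
def satCtx {D V : Type} (C : D → V) (w : D → V → Prop) : Prop :=
  ∀ d, w d (C d)

/-- `C ∪ Φ ⊨ φ` : classical propositional entailment. -/
def entails {D V : Type} (pred : D → V → V → Prop) (C : D → V)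
    (φ : CtxExpr D V) : Prop :=
  ∀ w : D → V → Prop, satPhi pred w → satCtx C w → φ.eval w

/-- `ancestor pred d x y` : `y` is an ancestor of `x` (including `x` itself),
    i.e. the reflexive-transitive closure of the predecessor relation. -/
def ancestor {D V : Type} (pred : D → V → V → Prop) (d : D) (x y : V) : Prop :=
  Relation.ReflTransGen (pred d) x y

/-- Tree-shapedness of each value domain: the parent is unique and the
    predecessor relation is acyclic. -/
def treeShaped {D V : Type} (pred : D → V → V → Prop) : Prop :=
  (∀ d v p p', pred d v p → pred d v p' → p = p') ∧
  (∀ d v, ¬ Relation.TransGen (pred d) v v)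

theorem Relation.ReflTransGen.eq_of_rel_of_rel {V : Type} {r : V → V → Prop}
    (huniq : Relator.RightUnique r) (hacyc : ∀ v, ¬ Relation.TransGen r v v)
    {v₁ v₂ p : V} (h₁ : r v₁ p) (h₂ : r v₂ p) (h : Relation.ReflTransGen r v₁ v₂) :
    v₁ = v₂ := by
  rcases h.cases_head with rfl | ⟨q, hq, hqv₂⟩
  · rfl
  -- the first step from `v₁` goes to `p`, so `p →⁺ p` through `v₂`
  · obtain rfl : q = p := huniq hq h₁
    exact (hacyc q (.tail' hqv₂ h₂)).elim

/-- every context together with `Φ` is satisfiable, witnessed by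
    the valuation making true exactly the ancestors of the assigned values. -/
theorem context_theory_satisfiable {D V : Type}
    (pred : D → V → V → Prop) (htree : treeShaped pred)
    (C : D → V) :
    satPhi pred (fun d v => ancestor pred d (C d) v) ∧
      satCtx C (fun d v => ancestor pred d (C d) v) := by
  obtain ⟨huniq, hacyc⟩ := htree
  have upward_closed (d : D) (v₁ v₂ : V) (h : pred d v₁ v₂) (h₁ : ancestor pred d (C d) v₁) :
      ancestor pred d (C d) v₂ := h₁.tail h
  have siblings_disjoint (d : D) (v₁ v₂ p : V) (h₁ : pred d v₁ p) (h₂ : pred d v₂ p)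
      (hne : v₁ ≠ v₂) : ¬ (ancestor pred d (C d) v₁ ∧ ancestor pred d (C d) v₂) := by
    rintro ⟨hv₁, hv₂⟩
    rcases hv₁.total_of_right_unique (huniq d) hv₂ with h | h
    · exact hne (h.eq_of_rel_of_rel (huniq d) (hacyc d) h₁ h₂)
    · exact hne (h.eq_of_rel_of_rel (huniq d) (hacyc d) h₂ h₁).symm
  exact ⟨⟨upward_closed, siblings_disjoint⟩, fun _ => .refl⟩
end

section
/- For every context C, the context obtained by replacing the value of each dimension d with the root value ⊤_d of its tree yields (with Φ) the smallest contextualized TBox among all contexts: T_Γ^{C_⊤} ⊆ T_Γ^C for every context C, provided every guard φ in T_Γ is a positive Boolean combination (built from ∧ and ∨ only) of atoms. -/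
/-- The TBox of a contextualized TBox `TG` in context `C`:
    `T_Γ^C = { t | ⟨t : φ⟩ ∈ T_Γ and C ∪ Φ ⊨ φ }`. -/
def tboxIn {D V T : Type} (pred : D → V → V → Prop)
    (TG : Set (T × CtxExpr D V)) (C : D → V) : Set T :=
  {t | ∃ φ, (t, φ) ∈ TG ∧ entails pred C φ}

/-- Positive context expressions: built from atoms using only `∧` and `∨`. -/
def CtxExpr.positive {D V : Type} : CtxExpr D V → Prop
  | .atom _ _ => True
  | .and a b  => a.positive ∧ b.positive
  | .or a b   => a.positive ∧ b.positive
  | .not _    => False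

/-! Upward closure in `Φ` makes every valuation satisfying a context `C` also satisfy any context
whose values are ancestors of those of `C`; hence entailment, and with it the contextualized TBox,
can only shrink when values move up the trees, and the roots are ancestors of everything. -/

section Monotonicity

variable {D V T : Type} {pred : D → V → V → Prop} {w : D → V → Prop}

theorem satPhi.of_ancestor (hw : satPhi pred w) {d : D} {x y : V} (h : ancestor pred d x y)
    (hx : w d x) : w d y := by
  induction h with
  | refl => exact hx
  | tail _ hstep ih => exact hw.1 d _ _ hstep ih

theorem satCtx.of_ancestor {C C' : D → V} (hw : satPhi pred w)
    (hCC' : ∀ d, ancestor pred d (C d) (C' d)) (hC : satCtx C w) : satCtx C' w :=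
  fun d => hw.of_ancestor (hCC' d) (hC d)

theorem entails.of_ancestor {C C' : D → V} {φ : CtxExpr D V}
    (hCC' : ∀ d, ancestor pred d (C d) (C' d)) (h : entails pred C' φ) : entails pred C φ :=
  fun w hw hC => h w hw (hC.of_ancestor hw hCC')

theorem tboxIn_anti_of_ancestor (TG : Set (T × CtxExpr D V)) {C C' : D → V}
    (hCC' : ∀ d, ancestor pred d (C d) (C' d)) : tboxIn pred TG C' ⊆ tboxIn pred TG C :=
  fun _ ⟨φ, hmem, hent⟩ => ⟨φ, hmem, hent.of_ancestor hCC'⟩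

end Monotonicity

theorem tboxIn_root_smallest_general {D V T : Type}
    (pred : D → V → V → Prop)
    (root : D → V)
    (hroot : ∀ d v, ancestor pred d v (root d))
    (TG : Set (T × CtxExpr D V)) :
    ∀ C : D → V, tboxIn pred TG root ⊆ tboxIn pred TG C :=
  fun C => tboxIn_anti_of_ancestor TG fun d => hroot d (C d)

/-- if all guards in `T_Γ` are positive, the context assigning
    each dimension its root value yields the smallest TBox:
    `T_Γ^{C_⊤} ⊆ T_Γ^C` for every context `C`. -/
theorem tboxIn_root_smallest {D V T : Type}
    (pred : D → V → V → Prop) (htree : treeShaped pred)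
    (root : D → V)
    (hroot : ∀ d v, ancestor pred d v (root d))
    (TG : Set (T × CtxExpr D V)) (hfin : TG.Finite)
    (hpos : ∀ t φ, (t, φ) ∈ TG → CtxExpr.positive φ) :
    ∀ C : D → V, tboxIn pred TG root ⊆ tboxIn pred TG C :=
  tboxIn_root_smallest_general pred root hroot TG
end

section
/- If two transition systems are related by a bisimulation that additionally preserves the atomic state predicates, then their initial states satisfy exactly the same closed propositional μ-calculus formulas. -/
/-- μ-calculus formulas over atomic propositions `AP` and variables `Var`. -/
inductive MuF (AP Var : Type) where
  | atom : AP → MuF AP Var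
  | var  : Var → MuF AP Var
  | not  : MuF AP Var → MuF AP Var
  | and  : MuF AP Var → MuF AP Var → MuF AP Var
  | dia  : MuF AP Var → MuF AP Var
  | mu   : Var → MuF AP Var → MuF AP Var

/-- Extension function over a labelled transition system `(S, tr, L)`. -/
def MuF.ext {AP Var S : Type} [DecidableEq Var]
    (tr : S → S → Prop) (L : S → Set AP) :
    MuF AP Var → (Var → Set S) → Set S
  | .atom a, _ => {s | a ∈ L s}
  | .var Z, V => V Z
  | .not φ, V => (φ.ext tr L V)ᶜ
  | .and a b, V => a.ext tr L V ∩ b.ext tr L V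
  | .dia φ, V => {s | ∃ s', tr s s' ∧ s' ∈ φ.ext tr L V}
  | .mu Z φ, V => ⋂₀ {E : Set S | φ.ext tr L (Function.update V Z E) ⊆ E}

/-- Polarity tracking: every free occurrence of `Z` has parity `b`. -/
def MuF.pol {AP Var : Type} (Z : Var) : MuF AP Var → Bool → Prop
  | .atom _, _ => True
  | .var W, b => W = Z → b = true
  | .not φ, b => φ.pol Z (!b)
  | .and a c, b => a.pol Z b ∧ c.pol Z b
  | .dia φ, b => φ.pol Z b
  | .mu W φ, b => W = Z ∨ φ.pol Z b

/-- `Z` occurs free in `φ`. -/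
def MuF.freeIn {AP Var : Type} (Z : Var) : MuF AP Var → Prop
  | .atom _ => False
  | .var W => W = Z
  | .not φ => φ.freeIn Z
  | .and a b => a.freeIn Z ∨ b.freeIn Z
  | .dia φ => φ.freeIn Z
  | .mu W φ => W ≠ Z ∧ φ.freeIn Z

/-- Well-formedness: every bound variable occurs only positively in its
    fixpoint body. -/
def MuF.wf {AP Var : Type} : MuF AP Var → Prop
  | .atom _ => True
  | .var _ => True
  | .not φ => φ.wf
  | .and a b => a.wf ∧ b.wf
  | .dia φ => φ.wf
  | .mu Z φ => φ.pol Z true ∧ φ.wf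

/-- Bisimulation between two labelled transition systems, preserving labels. -/
def Bisimulation {AP S1 S2 : Type}
    (tr1 : S1 → S1 → Prop) (L1 : S1 → Set AP)
    (tr2 : S2 → S2 → Prop) (L2 : S2 → Set AP)
    (B : S1 → S2 → Prop) : Prop :=
  (∀ s t, B s t → L1 s = L2 t) ∧
  (∀ s t s', B s t → tr1 s s' → ∃ t', tr2 t t' ∧ B s' t') ∧
  (∀ s t t', B s t → tr2 t t' → ∃ s', tr1 s s' ∧ B s' t')

/-!
By induction on the formula, membership in an extension is carried along `B`, provided the
valuations of the free variables are carried along `B` in the direction of their polarity.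
Negation reverses that direction, which is why the bisimulation has to be used in both
directions. For `μZ. ψ` and a prefixed point `E₂` on the second side, the set of states all of
whose `B`-partners lie in `E₂` is, by positivity of `Z` in `ψ` and induction, a prefixed point on
the first side; hence the least fixed point is carried along `B` as well.
-/

section

variable {AP Var S1 S2 : Type}

def RelTransfer (B : S1 → S2 → Prop) (X : Set S1) (Y : Set S2) : Prop :=
  ∀ s t, B s t → s ∈ X → t ∈ Y

theorem Bisimulation.flip {tr1 : S1 → S1 → Prop} {L1 : S1 → Set AP}
    {tr2 : S2 → S2 → Prop} {L2 : S2 → Set AP} {B : S1 → S2 → Prop}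
    (hB : Bisimulation tr1 L1 tr2 L2 B) : Bisimulation tr2 L2 tr1 L1 (flip B) :=
  let ⟨hlabel, hforth, hback⟩ := hB
  ⟨fun t s h => (hlabel s t h).symm, fun t s t' h => hback s t t' h,
    fun t s s' h => hforth s t s' h⟩

/-- A variable occurring only positively needs its valuation carried forward along `B`, one
occurring only negatively needs it carried backward, and one of mixed polarity needs both. -/
def MuF.Compatible (B : S1 → S2 → Prop) (φ : MuF AP Var) (V1 : Var → Set S1)
    (V2 : Var → Set S2) : Prop :=
  ∀ Z, φ.freeIn Z →
    (RelTransfer B (V1 Z) (V2 Z) ∨ φ.pol Z false) ∧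
    (RelTransfer (flip B) (V2 Z) (V1 Z) ∨ φ.pol Z true)

namespace MuF.Compatible

variable {B : S1 → S2 → Prop} {V1 : Var → Set S1} {V2 : Var → Set S2}

theorem of_closed {φ : MuF AP Var} (h : ∀ Z, ¬ φ.freeIn Z) : φ.Compatible B V1 V2 :=
  fun Z hZ => absurd hZ (h Z)

theorem of_not {φ : MuF AP Var} (h : (MuF.not φ).Compatible B V1 V2) :
    φ.Compatible (flip B) V2 V1 :=
  fun Z hZ => (h Z hZ).symm

theorem of_and_left {φ ψ : MuF AP Var} (h : (MuF.and φ ψ).Compatible B V1 V2) :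
    φ.Compatible B V1 V2 :=
  fun Z hZ => (h Z (Or.inl hZ)).imp (Or.imp_right And.left) (Or.imp_right And.left)

theorem of_and_right {φ ψ : MuF AP Var} (h : (MuF.and φ ψ).Compatible B V1 V2) :
    ψ.Compatible B V1 V2 :=
  fun Z hZ => (h Z (Or.inr hZ)).imp (Or.imp_right And.right) (Or.imp_right And.right)

theorem update_of_mu [DecidableEq Var] {W : Var} {ψ : MuF AP Var}
    (h : (MuF.mu W ψ).Compatible B V1 V2) (hpos : ψ.pol W true) {E1 : Set S1} {E2 : Set S2}
    (hE : RelTransfer B E1 E2) :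
    ψ.Compatible B (Function.update V1 W E1) (Function.update V2 W E2) := by
  intro Z hZ
  by_cases hZW : Z = W
  · subst hZW
    simp only [Function.update_self]
    exact ⟨Or.inl hE, Or.inr hpos⟩
  · simp only [Function.update_of_ne hZW]
    have hWZ : W ≠ Z := Ne.symm hZW
    exact (h Z ⟨hWZ, hZ⟩).imp (Or.imp_right (·.resolve_left hWZ))
      (Or.imp_right (·.resolve_left hWZ))

end MuF.Compatible

theorem MuF.relTransfer_ext [DecidableEq Var] {tr1 : S1 → S1 → Prop} {L1 : S1 → Set AP}
    {tr2 : S2 → S2 → Prop} {L2 : S2 → Set AP} {B : S1 → S2 → Prop}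
    (hB : Bisimulation tr1 L1 tr2 L2 B) {φ : MuF AP Var} (hwf : φ.wf)
    {V1 : Var → Set S1} {V2 : Var → Set S2} (hV : φ.Compatible B V1 V2) :
    RelTransfer B (φ.ext tr1 L1 V1) (φ.ext tr2 L2 V2) := by
  induction φ generalizing S1 S2 with
  | atom a =>
    intro s t hst hs
    simpa only [MuF.ext, Set.mem_ofPred_eq, hB.1 s t hst] using hs
  | var W =>
    obtain ⟨hforth | hneg, -⟩ := hV W rfl
    · exact hforth
    · exact absurd (hneg rfl) Bool.false_ne_true
  | not ψ ih =>
    intro s t hst hs ht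
    exact hs (ih hB.flip hwf hV.of_not t s hst ht)
  | and φ ψ ihφ ihψ =>
    intro s t hst hs
    exact ⟨ihφ hB hwf.1 hV.of_and_left s t hst hs.1, ihψ hB hwf.2 hV.of_and_right s t hst hs.2⟩
  | dia ψ ih =>
    rintro s t hst ⟨s', hss', hs'⟩
    obtain ⟨t', htt', hst'⟩ := hB.2.1 s t s' hst hss'
    exact ⟨t', htt', ih hB hwf hV s' t' hst' hs'⟩
  | mu W ψ ih =>
    intro s t hst hs E2 hE2
    let E1 : Set S1 := {u | ∀ v, B u v → v ∈ E2}
    have hE : RelTransfer B E1 E2 := fun u v huv hu => hu v huv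
    have hE1 : ψ.ext tr1 L1 (Function.update V1 W E1) ⊆ E1 := fun u hu v huv =>
      hE2 (ih hB hwf.2 (hV.update_of_mu hwf.1 hE) u v huv hu)
    exact hs E1 hE1 t hst

end

/-- bisimilar initial states satisfy exactly the same closed
    (well-formed) μ-calculus formulas. -/
theorem bisimulation_preserves_mu_calculus {AP Var S1 S2 : Type}
    [DecidableEq Var]
    (tr1 : S1 → S1 → Prop) (L1 : S1 → Set AP) (s01 : S1)
    (tr2 : S2 → S2 → Prop) (L2 : S2 → Set AP) (s02 : S2)
    (B : S1 → S2 → Prop)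
    (hB : Bisimulation tr1 L1 tr2 L2 B) (h0 : B s01 s02)
    (φ : MuF AP Var)
    (hclosed : ∀ Z : Var, ¬ φ.freeIn Z) (hwf : φ.wf) :
    ∀ (V1 : Var → Set S1) (V2 : Var → Set S2),
      (s01 ∈ φ.ext tr1 L1 V1 ↔ s02 ∈ φ.ext tr2 L2 V2) := by
  intro V1 V2
  exact ⟨MuF.relTransfer_ext hB hwf (.of_closed hclosed) s01 s02 h0,
    MuF.relTransfer_ext hB.flip hwf (.of_closed hclosed) s02 s01 h0⟩
end
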